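/- (Convergence of in-sample soft policy iteration) Let π₀ be any policy with π₀ ⪯ β, and define recursively for t ≥ 0: q_t as the unique function satisfying q_t = T^{π_t} q_t, and π_{t+1}(a|s) = exp(q_t(s,a)/τ) / Σ_{a' ∈ supp β(·|s)} exp(q_t(s,a')/τ) for a ∈ supp β(·|s) and 0 otherwise. Then every π_t satisfies π_t ⪯ β, the sequence q_t is pointwise nondecreasing, and q_t converges pointwise to the unique fixed point q̃*_β of the in-sample softmax optimality operator T*_β. -/

import Mathlib

open Finset

/-- The in-sample softmax optimality operator
`(T*_β q)(s,a) = r(s,a) + γ ∑_{s'} P(s,a)(s') · τ log ∑_{a' ∈ supp β(·|s')} exp(q(s',a')/τ)`. -/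
noncomputable def Tstar {S A : Type*} [Fintype S] [Fintype A]
    (r : S → A → ℝ) (γ τ : ℝ) (P : S → A → S → ℝ) (β : S → A → ℝ)
    (q : S → A → ℝ) : S → A → ℝ := fun s a =>
  r s a + γ * ∑ s', P s a s' *
    (τ * Real.log (∑ a' ∈ Finset.univ.filter (fun a' => 0 < β s' a'), Real.exp (q s' a' / τ)))

/-- The on-policy entropy-regularized Bellman operator
`(T^π q)(s,a) = r(s,a) + γ ∑_{s'} P(s,a)(s') ∑_{a' ∈ supp π(·|s')} π(a'|s')(q(s',a') − τ log π(a'|s'))`. -/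
noncomputable def Ton {S A : Type*} [Fintype S] [Fintype A]
    (r : S → A → ℝ) (γ τ : ℝ) (P : S → A → S → ℝ) (π : S → A → ℝ)
    (q : S → A → ℝ) : S → A → ℝ := fun s a =>
  r s a + γ * ∑ s', P s a s' *
    (∑ a' ∈ Finset.univ.filter (fun a' => 0 < π s' a'),
      π s' a' * (q s' a' - τ * Real.log (π s' a')))

/-!
Both `T^π` and `T*_β` are monotone and discount constant shifts by `γ`, so they are
`γ`-contractions in the sup norm and obey a comparison principle: `q ≤ T q` and `T q' ≤ q'`
force `q ≤ q'`. Gibbs' inequality (Jensen for `log`) gives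
`T^π ≤ T*_β` for `π ⪯ β`, with equality for the in-sample softmax of `q`. Hence
`q_t ≤ T*_β q_t = T^{π_{t+1}} q_t`, and comparison with the fixed point `q_{t+1}` of
`T^{π_{t+1}}` gives `q_t ≤ q_{t+1}`; comparison with `q̃*_β` gives `q_t ≤ q̃*_β`. Finally
`T*_β q_t ≤ q_{t+1} ≤ q̃*_β`, so the sup distance to `q̃*_β` shrinks by a factor `γ` each step.
-/

open Filter Topology

section Softmax

variable {A : Type*}

noncomputable def posSupp [Fintype A] (p : A → ℝ) : Finset A := univ.filter (0 < p ·)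

noncomputable def logSumExp (τ : ℝ) (D : Finset A) (v : A → ℝ) : ℝ :=
  τ * Real.log (∑ a ∈ D, Real.exp (v a / τ))

noncomputable def softValue [Fintype A] (τ : ℝ) (p v : A → ℝ) : ℝ :=
  ∑ a ∈ posSupp p, p a * (v a - τ * Real.log (p a))

open Classical in
noncomputable def softmax (τ : ℝ) (D : Finset A) (v : A → ℝ) (a : A) : ℝ :=
  if a ∈ D then Real.exp (v a / τ) / ∑ a' ∈ D, Real.exp (v a' / τ) else 0

@[simp]
theorem mem_posSupp [Fintype A] {p : A → ℝ} {a : A} : a ∈ posSupp p ↔ 0 < p a := by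
  simp [posSupp]

theorem sum_posSupp_eq_one [Fintype A] {p : A → ℝ} (h0 : ∀ a, 0 ≤ p a) (h1 : ∑ a, p a = 1) :
    ∑ a ∈ posSupp p, p a = 1 := by
  rwa [posSupp, sum_filter_of_ne fun a _ ha => (h0 a).lt_of_ne' ha]

theorem logSumExp_le_add {τ c : ℝ} (hτ : 0 < τ) {D : Finset A} (hD : D.Nonempty) {v w : A → ℝ}
    (h : ∀ a ∈ D, v a ≤ w a + c) : logSumExp τ D v ≤ logSumExp τ D w + c := by
  have hsum : ∑ a ∈ D, Real.exp (v a / τ) ≤ Real.exp (c / τ) * ∑ a ∈ D, Real.exp (w a / τ) := by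
    rw [mul_sum]
    refine sum_le_sum fun a ha => ?_
    rw [← Real.exp_add, Real.exp_le_exp, ← add_div]
    exact div_le_div_of_nonneg_right (by linarith [h a ha]) hτ.le
  have hlog := Real.log_le_log (sum_pos (fun a _ => Real.exp_pos _) hD) hsum
  rw [Real.log_mul (Real.exp_ne_zero _) (sum_pos (fun a _ => Real.exp_pos _) hD).ne',
    Real.log_exp] at hlog
  calc logSumExp τ D v ≤ τ * (c / τ + Real.log (∑ a ∈ D, Real.exp (w a / τ))) :=
        mul_le_mul_of_nonneg_left hlog hτ.le
    _ = logSumExp τ D w + c := by rw [logSumExp, mul_add, mul_div_cancel₀ _ hτ.ne', add_comm]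

theorem softValue_le_add [Fintype A] {τ c : ℝ} {p v w : A → ℝ} (hp : ∑ a ∈ posSupp p, p a = 1)
    (h : ∀ a, v a ≤ w a + c) : softValue τ p v ≤ softValue τ p w + c := by
  calc softValue τ p v ≤ ∑ a ∈ posSupp p, (p a * (w a - τ * Real.log (p a)) + p a * c) := by
        refine sum_le_sum fun a ha => ?_
        rw [← mul_add]
        exact mul_le_mul_of_nonneg_left (by linarith [h a]) (mem_posSupp.1 ha).le
    _ = softValue τ p w + c := by rw [sum_add_distrib, ← sum_mul, hp, one_mul, softValue]

theorem softValue_le_logSumExp [Fintype A] {τ : ℝ} (hτ : 0 < τ) {D : Finset A} {p : A → ℝ}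
    (hp : ∑ a ∈ posSupp p, p a = 1) (hpD : posSupp p ⊆ D) (v : A → ℝ) :
    softValue τ p v ≤ logSumExp τ D v := by
  have hpos : ∀ a ∈ posSupp p, 0 < p a := fun a ha => mem_posSupp.1 ha
  have hne : (posSupp p).Nonempty := nonempty_of_sum_ne_zero (by rw [hp]; exact one_ne_zero)
  have jensen := strictConcaveOn_log_Ioi.concaveOn.le_map_sum (t := posSupp p) (w := p)
    (p := fun a => Real.exp (v a / τ) / p a) (fun a ha => (hpos a ha).le) hp
    (fun a ha => div_pos (Real.exp_pos _) (hpos a ha))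
  have hlhs : ∑ a ∈ posSupp p, p a • Real.log (Real.exp (v a / τ) / p a) =
      softValue τ p v / τ := by
    rw [softValue, sum_div]
    refine sum_congr rfl fun a ha => ?_
    rw [smul_eq_mul, Real.log_div (Real.exp_ne_zero _) (hpos a ha).ne', Real.log_exp]
    field_simp
  have hrhs : ∑ a ∈ posSupp p, p a • (Real.exp (v a / τ) / p a) =
      ∑ a ∈ posSupp p, Real.exp (v a / τ) :=
    sum_congr rfl fun a ha => by rw [smul_eq_mul, mul_div_cancel₀ _ (hpos a ha).ne']
  rw [hlhs, hrhs, div_le_iff₀ hτ] at jensen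
  calc softValue τ p v ≤ τ * Real.log (∑ a ∈ posSupp p, Real.exp (v a / τ)) := by linarith
    _ ≤ logSumExp τ D v := by
      refine mul_le_mul_of_nonneg_left (Real.log_le_log (sum_pos (fun a _ => Real.exp_pos _) hne)
        (sum_le_sum_of_subset_of_nonneg hpD fun a _ _ => (Real.exp_pos _).le)) hτ.le

theorem posSupp_softmax [Fintype A] (τ : ℝ) (D : Finset A) (v : A → ℝ) :
    posSupp (softmax τ D v) = D := by
  ext a
  by_cases ha : a ∈ D
  · have : 0 < ∑ a' ∈ D, Real.exp (v a' / τ) := sum_pos (fun a _ => Real.exp_pos _) ⟨a, ha⟩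
    simp only [mem_posSupp, softmax, ha, if_true, iff_true]
    exact div_pos (Real.exp_pos _) this
  · simp [softmax, ha]

theorem sum_softmax (τ : ℝ) {D : Finset A} (hD : D.Nonempty) (v : A → ℝ) :
    ∑ a ∈ D, softmax τ D v a = 1 := by
  rw [sum_congr rfl fun a ha => by rw [softmax, if_pos ha], ← sum_div,
    div_self (sum_pos (fun a _ => Real.exp_pos _) hD).ne']

theorem softValue_softmax [Fintype A] {τ : ℝ} (hτ : 0 < τ) {D : Finset A} (hD : D.Nonempty)
    (v : A → ℝ) :
    softValue τ (softmax τ D v) v = logSumExp τ D v := by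
  have hZ : 0 < ∑ a ∈ D, Real.exp (v a / τ) := sum_pos (fun a _ => Real.exp_pos _) hD
  have hterm : ∀ a ∈ D, softmax τ D v a * (v a - τ * Real.log (softmax τ D v a)) =
      softmax τ D v a * logSumExp τ D v := fun a ha => by
    rw [softmax, if_pos ha, Real.log_div (Real.exp_ne_zero _) hZ.ne', Real.log_exp, logSumExp]
    field_simp
    ring
  rw [softValue, posSupp_softmax, sum_congr rfl hterm, ← sum_mul, sum_softmax τ hD, one_mul]

end Softmax

section Operators

variable {S A : Type*}

theorem dist_le_iff_forall_abs_sub_le [Fintype S] [Fintype A] {q q' : S → A → ℝ} {c : ℝ}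
    (hc : 0 ≤ c) : dist q q' ≤ c ↔ ∀ s a, |q s a - q' s a| ≤ c := by
  simp only [dist_pi_le_iff hc, Real.dist_eq]

theorem dist_le_dist_of_le_of_le [Fintype S] [Fintype A] {f g h : S → A → ℝ} (hfg : f ≤ g)
    (hgh : g ≤ h) : dist g h ≤ dist f h := by
  refine (dist_le_iff_forall_abs_sub_le dist_nonneg).2 fun s a => ?_
  calc |g s a - h s a| ≤ |f s a - h s a| := by
        rw [abs_of_nonpos (sub_nonpos.2 (hgh s a)),
          abs_of_nonpos (sub_nonpos.2 ((hfg s a).trans (hgh s a)))]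
        linarith [hfg s a]
    _ ≤ dist f h := (dist_le_iff_forall_abs_sub_le dist_nonneg).1 le_rfl s a

theorem tendsto_of_dist_succ_le {X : Type*} [PseudoMetricSpace X] {x : ℕ → X} {y : X} {γ : ℝ}
    (hγ0 : 0 ≤ γ) (hγ1 : γ < 1) (h : ∀ t, dist (x (t + 1)) y ≤ γ * dist (x t) y) :
    Tendsto x atTop (𝓝 y) := by
  have hgeom : ∀ t, dist (x t) y ≤ γ ^ t * dist (x 0) y := by
    intro t
    induction t with
    | zero => simp
    | succ t ih =>
      calc dist (x (t + 1)) y ≤ γ * dist (x t) y := h t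
        _ ≤ γ * (γ ^ t * dist (x 0) y) := mul_le_mul_of_nonneg_left ih hγ0
        _ = γ ^ (t + 1) * dist (x 0) y := by ring
  refine tendsto_iff_dist_tendsto_zero.2 (squeeze_zero (fun _ => dist_nonneg) hgeom ?_)
  simpa using (tendsto_pow_atTop_nhds_zero_of_lt_one hγ0 hγ1).mul_const (dist (x 0) y)

/-- Blackwell's sufficient conditions (monotonicity and discounting by `γ`) for a sup-norm
contraction, as one inequality. -/
def SatisfiesBlackwell (γ : ℝ) (T : (S → A → ℝ) → S → A → ℝ) : Prop :=
  ∀ q q' c, (∀ s a, q s a ≤ q' s a + c) → ∀ s a, T q s a ≤ T q' s a + γ * c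

namespace SatisfiesBlackwell

variable {γ : ℝ} {T : (S → A → ℝ) → S → A → ℝ}

theorem monotone (hT : SatisfiesBlackwell γ T) : Monotone T := fun q q' h s a => by
  simpa using hT q q' 0 (fun s a => by simpa using h s a) s a

theorem le_of_le_map_of_map_le [Finite S] [Finite A] (hT : SatisfiesBlackwell γ T) (hγ : γ < 1)
    {q q' : S → A → ℝ} (hq : q ≤ T q) (hq' : T q' ≤ q') : q ≤ q' := by
  by_contra hne
  obtain ⟨s₀, a₀, h₀⟩ : ∃ s a, q' s a < q s a := by simpa [Pi.le_def] using hne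
  have : Nonempty (S × A) := ⟨(s₀, a₀)⟩
  obtain ⟨⟨s, a⟩, hmax⟩ := Finite.exists_max fun p : S × A => q p.1 p.2 - q' p.1 p.2
  have hd : 0 < q s a - q' s a := by linarith [hmax (s₀, a₀)]
  have hT' := hT q q' (q s a - q' s a) (fun s' a' => by linarith [hmax (s', a')]) s a
  nlinarith [hq s a, hq' s a]

theorem contractingWith [Fintype S] [Fintype A] (hT : SatisfiesBlackwell γ T) (hγ0 : 0 ≤ γ)
    (hγ1 : γ < 1) : ContractingWith ⟨γ, hγ0⟩ T := by
  refine ⟨hγ1, LipschitzWith.of_dist_le_mul fun q q' => ?_⟩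
  have hd := (dist_le_iff_forall_abs_sub_le (q := q) (q' := q') dist_nonneg).1 le_rfl
  change dist (T q) (T q') ≤ γ * dist q q'
  refine (dist_le_iff_forall_abs_sub_le (by positivity)).2 fun s a => abs_sub_le_iff.2 ⟨?_, ?_⟩
  · linarith [hT q q' (dist q q') (fun s a => by linarith [(abs_sub_le_iff.1 (hd s a)).1]) s a]
  · linarith [hT q' q (dist q q') (fun s a => by linarith [(abs_sub_le_iff.1 (hd s a)).2]) s a]

theorem tendsto_of_map_le_of_le_fixedPoint [Fintype S] [Fintype A] (hT : SatisfiesBlackwell γ T)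
    (hγ0 : 0 ≤ γ) (hγ1 : γ < 1) {q : S → A → ℝ} (hq : T q = q) {x : ℕ → S → A → ℝ}
    (hlow : ∀ t, T (x t) ≤ x (t + 1)) (hup : ∀ t, x t ≤ q) : Tendsto x atTop (𝓝 q) := by
  refine tendsto_of_dist_succ_le hγ0 hγ1 fun t => ?_
  calc dist (x (t + 1)) q ≤ dist (T (x t)) (T q) := by
        rw [hq]; exact dist_le_dist_of_le_of_le (hlow t) (hup (t + 1))
    _ ≤ γ * dist (x t) q := (hT.contractingWith hγ0 hγ1).2.dist_le_mul _ _

end SatisfiesBlackwell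

theorem satisfiesBlackwell_bellman [Fintype S] {γ : ℝ} (hγ : 0 ≤ γ) (r : S → A → ℝ)
    {P : S → A → S → ℝ} (hP0 : ∀ s a s', 0 ≤ P s a s') (hP1 : ∀ s a, ∑ s', P s a s' = 1)
    (V : (S → A → ℝ) → S → ℝ)
    (hV : ∀ q q' c, (∀ s a, q s a ≤ q' s a + c) → ∀ s, V q s ≤ V q' s + c) :
    SatisfiesBlackwell γ (fun q s a => r s a + γ * ∑ s', P s a s' * V q s') := by
  intro q q' c h s a
  have hmean : ∑ s', P s a s' * V q s' ≤ ∑ s', P s a s' * V q' s' + c :=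
    calc ∑ s', P s a s' * V q s' ≤ ∑ s', (P s a s' * V q' s' + P s a s' * c) :=
          sum_le_sum fun s' _ => by
            rw [← mul_add]; exact mul_le_mul_of_nonneg_left (hV q q' c h s') (hP0 s a s')
      _ = ∑ s', P s a s' * V q' s' + c := by rw [sum_add_distrib, ← sum_mul, hP1, one_mul]
  linarith [mul_le_mul_of_nonneg_left hmean hγ]

end Operators

section SoftBellman

variable {S A : Type*} [Fintype S] [Fintype A] (r : S → A → ℝ) {γ τ : ℝ} {P : S → A → S → ℝ}

theorem Tstar_satisfiesBlackwell (hγ : 0 ≤ γ) (hP0 : ∀ s a s', 0 ≤ P s a s')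
    (hP1 : ∀ s a, ∑ s', P s a s' = 1) (hτ : 0 < τ) {β : S → A → ℝ}
    (hβ : ∀ s, (posSupp (β s)).Nonempty) : SatisfiesBlackwell γ (Tstar r γ τ P β) :=
  satisfiesBlackwell_bellman hγ r hP0 hP1 (fun q s => logSumExp τ (posSupp (β s)) (q s))
    fun _ _ _ h s => logSumExp_le_add hτ (hβ s) fun a _ => h s a

theorem Ton_satisfiesBlackwell (hγ : 0 ≤ γ) (hP0 : ∀ s a s', 0 ≤ P s a s')
    (hP1 : ∀ s a, ∑ s', P s a s' = 1) {π : S → A → ℝ} (hπ : ∀ s, ∑ a ∈ posSupp (π s), π s a = 1) :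
    SatisfiesBlackwell γ (Ton r γ τ P π) :=
  satisfiesBlackwell_bellman hγ r hP0 hP1 (fun q s => softValue τ (π s) (q s))
    fun _ _ _ h s => softValue_le_add (hπ s) (h s)

theorem Ton_le_Tstar (hγ : 0 ≤ γ) (hP0 : ∀ s a s', 0 ≤ P s a s') (hτ : 0 < τ)
    {π β : S → A → ℝ} (hπ : ∀ s, ∑ a ∈ posSupp (π s), π s a = 1)
    (hπβ : ∀ s a, 0 < π s a → 0 < β s a) (q : S → A → ℝ) :
    Ton r γ τ P π q ≤ Tstar r γ τ P β q := fun s a =>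
  add_le_add le_rfl (mul_le_mul_of_nonneg_left (sum_le_sum fun s' _ =>
    mul_le_mul_of_nonneg_left (softValue_le_logSumExp hτ (hπ s')
      (fun a ha => mem_posSupp.2 (hπβ s' a (mem_posSupp.1 ha))) (q s')) (hP0 s a s')) hγ)

theorem Ton_softmax_eq_Tstar (hτ : 0 < τ) {β : S → A → ℝ} (hβ : ∀ s, (posSupp (β s)).Nonempty)
    (q : S → A → ℝ) :
    Ton r γ τ P (fun s => softmax τ (posSupp (β s)) (q s)) q = Tstar r γ τ P β q := by
  funext s a
  change r s a + γ * ∑ s', P s a s' * softValue τ (softmax τ (posSupp (β s')) (q s')) (q s') =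
    r s a + γ * ∑ s', P s a s' * logSumExp τ (posSupp (β s')) (q s')
  simp only [softValue_softmax hτ (hβ _)]

end SoftBellman

theorem insample_soft_policy_iteration_converges_general {S A : Type*}
    [Fintype S] [Fintype A]
    (r : S → A → ℝ) (γ : ℝ) (hγ0 : 0 ≤ γ) (hγ1 : γ < 1)
    (P : S → A → S → ℝ) (hP0 : ∀ s a s', 0 ≤ P s a s') (hP1 : ∀ s a, (∑ s', P s a s') = 1)
    (τ : ℝ) (hτ : 0 < τ)
    (β : S → A → ℝ) (hβ0 : ∀ s a, 0 ≤ β s a) (hβ1 : ∀ s, (∑ a, β s a) = 1)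
    (pit : ℕ → S → A → ℝ) (qt : ℕ → S → A → ℝ)
    (hpi0_nonneg : ∀ s a, 0 ≤ pit 0 s a) (hpi0_sum : ∀ s, (∑ a, pit 0 s a) = 1)
    (hpi0_sub : ∀ s a, 0 < pit 0 s a → 0 < β s a)
    (heval : ∀ t, qt t = Ton r γ τ P (pit t) (qt t))
    (himprove : ∀ t s a, pit (t + 1) s a =
      if 0 < β s a then
        Real.exp (qt t s a / τ) /
          ∑ a' ∈ Finset.univ.filter (fun a' => 0 < β s a'), Real.exp (qt t s a' / τ)
      else 0) :
    (∀ t s a, 0 < pit t s a → 0 < β s a) ∧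
    (∀ t s a, qt t s a ≤ qt (t + 1) s a) ∧
    (∃ qstar : S → A → ℝ, Tstar r γ τ P β qstar = qstar ∧
      (∀ q : S → A → ℝ, Tstar r γ τ P β q = q → q = qstar) ∧
      (∀ s a, Filter.Tendsto (fun t : ℕ => qt t s a) Filter.atTop (nhds (qstar s a)))) := by
  have hβ : ∀ s, (posSupp (β s)).Nonempty := fun s => nonempty_of_sum_ne_zero <| by
    rw [sum_posSupp_eq_one (hβ0 s) (hβ1 s)]; exact one_ne_zero
  have hsoftmax : ∀ t, pit (t + 1) = fun s => softmax τ (posSupp (β s)) (qt t s) := fun t => by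
    funext s a
    simp [himprove, softmax, posSupp]
  have hsupp : ∀ t s a, 0 < pit t s a → 0 < β s a
    | 0 => hpi0_sub
    | t + 1 => fun s a h => by
      rwa [← mem_posSupp, hsoftmax, posSupp_softmax, mem_posSupp] at h
  have hsum : ∀ t s, ∑ a ∈ posSupp (pit t s), pit t s a = 1
    | 0 => fun s => sum_posSupp_eq_one (hpi0_nonneg s) (hpi0_sum s)
    | t + 1 => fun s => by rw [hsoftmax, posSupp_softmax, sum_softmax τ (hβ s)]
  have hTon := fun t => Ton_satisfiesBlackwell r (τ := τ) hγ0 hP0 hP1 (hsum t)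
  have hTstar := Tstar_satisfiesBlackwell r hγ0 hP0 hP1 hτ hβ
  have himproves : ∀ t, Tstar r γ τ P β (qt t) = Ton r γ τ P (pit (t + 1)) (qt t) := fun t => by
    rw [hsoftmax, Ton_softmax_eq_Tstar r hτ hβ]
  have hle_Tstar : ∀ t, qt t ≤ Tstar r γ τ P β (qt t) := fun t =>
    (heval t).trans_le (Ton_le_Tstar r hγ0 hP0 hτ (hsum t) (hsupp t) (qt t))
  have hmono : ∀ t, qt t ≤ qt (t + 1) := fun t =>
    (hTon (t + 1)).le_of_le_map_of_map_le hγ1 ((hle_Tstar t).trans (himproves t).le)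
      (heval (t + 1)).ge
  have hcontr := hTstar.contractingWith hγ0 hγ1
  set qstar := ContractingWith.fixedPoint _ hcontr
  have hfix : Tstar r γ τ P β qstar = qstar := hcontr.fixedPoint_isFixedPt
  have hup : ∀ t, qt t ≤ qstar := fun t => hTstar.le_of_le_map_of_map_le hγ1 (hle_Tstar t) hfix.le
  have hlow : ∀ t, Tstar r γ τ P β (qt t) ≤ qt (t + 1) := fun t =>
    (himproves t).trans_le (((hTon (t + 1)).monotone (hmono t)).trans (heval (t + 1)).ge)
  refine ⟨hsupp, hmono, qstar, hfix, fun q hq => hcontr.fixedPoint_unique hq, fun s a => ?_⟩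
  exact tendsto_pi_nhds.1 (tendsto_pi_nhds.1
    (hTstar.tendsto_of_map_le_of_le_fixedPoint hγ0 hγ1 hfix hlow hup) s) a

/-- Convergence of in-sample soft policy iteration: starting from any policy `π₀ ⪯ β`, the
iterates of policy evaluation (`q_t = T^{π_t} q_t`) and in-sample softmax policy improvement
all satisfy `π_t ⪯ β`, the values `q_t` are pointwise nondecreasing, and `q_t` converges
pointwise to the unique fixed point of the in-sample softmax optimality operator `T*_β`. -/
theorem insample_soft_policy_iteration_converges {S A : Type*}
    [Fintype S] [Fintype A] [Nonempty S] [Nonempty A]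
    (r : S → A → ℝ) (γ : ℝ) (hγ0 : 0 ≤ γ) (hγ1 : γ < 1)
    (P : S → A → S → ℝ) (hP0 : ∀ s a s', 0 ≤ P s a s') (hP1 : ∀ s a, (∑ s', P s a s') = 1)
    (τ : ℝ) (hτ : 0 < τ)
    (β : S → A → ℝ) (hβ0 : ∀ s a, 0 ≤ β s a) (hβ1 : ∀ s, (∑ a, β s a) = 1)
    (pit : ℕ → S → A → ℝ) (qt : ℕ → S → A → ℝ)
    (hpi0_nonneg : ∀ s a, 0 ≤ pit 0 s a) (hpi0_sum : ∀ s, (∑ a, pit 0 s a) = 1)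
    (hpi0_sub : ∀ s a, 0 < pit 0 s a → 0 < β s a)
    (heval : ∀ t, qt t = Ton r γ τ P (pit t) (qt t))
    (himprove : ∀ t s a, pit (t + 1) s a =
      if 0 < β s a then
        Real.exp (qt t s a / τ) /
          ∑ a' ∈ Finset.univ.filter (fun a' => 0 < β s a'), Real.exp (qt t s a' / τ)
      else 0) :
    (∀ t s a, 0 < pit t s a → 0 < β s a) ∧
    (∀ t s a, qt t s a ≤ qt (t + 1) s a) ∧
    (∃ qstar : S → A → ℝ, Tstar r γ τ P β qstar = qstar ∧
      (∀ q : S → A → ℝ, Tstar r γ τ P β q = q → q = qstar) ∧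
      (∀ s a, Filter.Tendsto (fun t : ℕ => qt t s a) Filter.atTop (nhds (qstar s a)))) :=
  insample_soft_policy_iteration_converges_general r γ hγ0 hγ1 P hP0 hP1 τ hτ β hβ0 hβ1 pit qt
    hpi0_nonneg hpi0_sum hpi0_sub heval himprove
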